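/- arXiv:1509.05114 — 2 statements merged into one kernel-verified Lean document; each statement's English description precedes it below -/
import Mathlib

section
/- For every i ≥ 2, the i-th term of the derived series of ν(G) equals G^(i)·(Gφ)^(i)·[G^(i-1), (Gφ)^(i-1)]. In particular, ν(G)' = [G,Gφ]·G'·(G')φ. -/
open Monoid Subgroup
open scoped commutatorElement

/-- The relators of the presentation of ν(G): for all g, h, k ∈ G,
`[g,hφ]^k = [g^k,(h^k)φ]` and `[g,hφ]^(kφ) = [g^k,(h^k)φ]` (exponents denote conjugation). -/
def nuRels (G : Type*) [Group G] : Set (Monoid.Coprod G G) :=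
  { r | ∃ g h k : G,
      r = ((Coprod.inl k)⁻¹ * ⁅(Coprod.inl g : Coprod G G), Coprod.inr h⁆ * Coprod.inl k) *
          (⁅(Coprod.inl (k⁻¹ * g * k) : Coprod G G), Coprod.inr (k⁻¹ * h * k)⁆)⁻¹ ∨
      r = ((Coprod.inr k)⁻¹ * ⁅(Coprod.inl g : Coprod G G), Coprod.inr h⁆ * Coprod.inr k) *
          (⁅(Coprod.inl (k⁻¹ * g * k) : Coprod G G), Coprod.inr (k⁻¹ * h * k)⁆)⁻¹ }

/-- The group ν(G): the quotient of the free product G * Gφ by the defining relations. -/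
def Nu (G : Type*) [Group G] := Coprod G G ⧸ Subgroup.normalClosure (nuRels G)

instance (G : Type*) [Group G] : Group (Nu G) := QuotientGroup.Quotient.group _

/-- The canonical map G → ν(G) (the copy `G`). -/
def nuL (G : Type*) [Group G] : G →* Nu G := (QuotientGroup.mk' _).comp Coprod.inl

/-- The canonical map G → ν(G) (the copy `Gφ`). -/
def nuR (G : Type*) [Group G] : G →* Nu G := (QuotientGroup.mk' _).comp Coprod.inr


/-!
Write `T = [G, Gφ]` and `ρ : ν(G) → G` for the retraction identifying the two copies of `G`.
The defining relations say that `k` and `kφ` conjugate the generators of `T` in the same way, so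
`T` is normal and conjugation on `T` factors through `ρ`. A computation on generators upgrades
this to `[t, w] = [ρ t, (ρ w)φ]` for `t ∈ T` and arbitrary `w`: commutators with elements of
`[Q, Qφ]` fall into `[P, Pφ]` as soon as `[Q, Q] ≤ P`. Hence, for `P` normal and `[Q, Q] ≤ P`,
the commutator subgroup of `P · Pφ · [Q, Qφ]` is `[P, P] · [P, P]φ · [P, Pφ]`, and the theorem
follows by induction along the derived series of `G`.
-/

namespace Subgroup

variable {G : Type*} [Group G] {H₁ H₂ K N : Subgroup G} [N.Normal]

lemma commutator_le_iff_map_le_centralizer :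
    ⁅H₁, K⁆ ≤ N ↔ H₁.map (QuotientGroup.mk' N) ≤ centralizer (K.map (QuotientGroup.mk' N)) := by
  rw [← commutator_eq_bot_iff_le_centralizer, ← map_commutator, map_eq_bot_iff,
    QuotientGroup.ker_mk']

lemma commutator_sup_left_le_iff : ⁅H₁ ⊔ H₂, K⁆ ≤ N ↔ ⁅H₁, K⁆ ≤ N ∧ ⁅H₂, K⁆ ≤ N := by
  simp only [commutator_le_iff_map_le_centralizer, map_sup, sup_le_iff]

end Subgroup

namespace Nu

variable {G : Type*} [Group G]

def lift {E : Type*} [Group E] (u v : G →* E)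
    (hu : ∀ g h k, u k * ⁅u g, v h⁆ * (u k)⁻¹ = ⁅u (k * g * k⁻¹), v (k * h * k⁻¹)⁆)
    (hv : ∀ g h k, v k * ⁅u g, v h⁆ * (v k)⁻¹ = ⁅u (k * g * k⁻¹), v (k * h * k⁻¹)⁆) :
    Nu G →* E :=
  QuotientGroup.lift _ (Coprod.lift u v) <| normalClosure_le_normal <| by
    rintro _ ⟨g, h, k, rfl | rfl⟩
    · simpa only [SetLike.mem_coe, MonoidHom.mem_ker, map_mul, map_inv, map_commutatorElement,
        Coprod.lift_apply_inl, Coprod.lift_apply_inr, mul_inv_eq_one, inv_inv] using hu g h k⁻¹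
    · simpa only [SetLike.mem_coe, MonoidHom.mem_ker, map_mul, map_inv, map_commutatorElement,
        Coprod.lift_apply_inl, Coprod.lift_apply_inr, mul_inv_eq_one, inv_inv] using hv g h k⁻¹

@[elab_as_elim]
lemma induction_on {p : Nu G → Prop} (x : Nu G) (nuL : ∀ g, p (nuL G g))
    (nuR : ∀ g, p (nuR G g)) (mul : ∀ x y, p x → p y → p (x * y)) : p x := by
  induction x using QuotientGroup.induction_on with
  | H x => induction x using Coprod.induction_on with
    | inl g => exact nuL g
    | inr g => exact nuR g
    | mul x y hx hy => exact mul _ _ hx hy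

lemma nuL_conj_commutator (g h k : G) :
    nuL G k * ⁅nuL G g, nuR G h⁆ * (nuL G k)⁻¹ =
      ⁅nuL G (k * g * k⁻¹), nuR G (k * h * k⁻¹)⁆ := by
  have := (QuotientGroup.eq_one_iff _).mpr <|
    subset_normalClosure (s := nuRels G) ⟨g, h, k⁻¹, Or.inl rfl⟩
  simp only [QuotientGroup.mk_mul, QuotientGroup.mk_inv, mul_inv_eq_one, map_inv, inv_inv] at this
  exact this

lemma nuR_conj_commutator (g h k : G) :
    nuR G k * ⁅nuL G g, nuR G h⁆ * (nuR G k)⁻¹ =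
      ⁅nuL G (k * g * k⁻¹), nuR G (k * h * k⁻¹)⁆ := by
  have := (QuotientGroup.eq_one_iff _).mpr <|
    subset_normalClosure (s := nuRels G) ⟨g, h, k⁻¹, Or.inr rfl⟩
  simp only [QuotientGroup.mk_mul, QuotientGroup.mk_inv, mul_inv_eq_one, map_inv, inv_inv] at this
  exact this

def retract : Nu G →* G :=
  lift (.id G) (.id G) (fun _ _ _ ↦ conjugate_commutatorElement ..)
    (fun _ _ _ ↦ conjugate_commutatorElement ..)

@[simp] lemma retract_nuL (g : G) : retract (nuL G g) = g := rfl

@[simp] lemma retract_nuR (g : G) : retract (nuR G g) = g := rfl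

def swap : Nu G →* Nu G :=
  lift (nuR G) (nuL G)
    (fun g h k ↦ by
      rw [← commutatorElement_inv, ← conj_inv, nuR_conj_commutator, commutatorElement_inv])
    (fun g h k ↦ by
      rw [← commutatorElement_inv, ← conj_inv, nuL_conj_commutator, commutatorElement_inv])

lemma normal_of_le_comap_conj (H : Subgroup (Nu G))
    (hl : ∀ k, H ≤ H.comap (MulAut.conj (nuL G k)).toMonoidHom)
    (hr : ∀ k, H ≤ H.comap (MulAut.conj (nuR G k)).toMonoidHom) : H.Normal where
  conj_mem x hx w := by
    induction w using induction_on generalizing x with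
    | nuL k => exact hl k hx
    | nuR k => exact hr k hx
    | mul w w' hw hw' => simpa only [mul_assoc, mul_inv_rev] using hw _ (hw' x hx)

/-- The subgroup `[M, Nφ]` of `ν(G)`. -/
def mixedCommutator (M N : Subgroup G) : Subgroup (Nu G) := ⁅M.map (nuL G), N.map (nuR G)⁆

lemma mixedCommutator_mono {M M' N N' : Subgroup G} (hM : M ≤ M') (hN : N ≤ N') :
    mixedCommutator M N ≤ mixedCommutator M' N' :=
  commutator_mono (map_mono hM) (map_mono hN)

instance mixedCommutator_normal (M N : Subgroup G) [M.Normal] [N.Normal] :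
    (mixedCommutator M N).Normal := by
  refine normal_of_le_comap_conj _ (fun k ↦ ?_) (fun k ↦ ?_) <;>
  · refine commutator_le.mpr ?_
    rintro _ ⟨g, hg, rfl⟩ _ ⟨h, hh, rfl⟩
    simp only [mem_comap, MulEquiv.coe_toMonoidHom, MulAut.conj_apply, nuL_conj_commutator,
      nuR_conj_commutator]
    exact commutator_mem_commutator (mem_map_of_mem _ (Normal.conj_mem ‹_› g hg k))
      (mem_map_of_mem _ (Normal.conj_mem ‹_› h hh k))

lemma conj_nuL_eq_conj_nuR {t : Nu G} (ht : t ∈ mixedCommutator ⊤ ⊤) (k : G) :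
    nuL G k * t * (nuL G k)⁻¹ = nuR G k * t * (nuR G k)⁻¹ := by
  suffices mixedCommutator ⊤ ⊤ ≤ MonoidHom.eqLocus (MulAut.conj (nuL G k)).toMonoidHom
      (MulAut.conj (nuR G k)).toMonoidHom from this ht
  refine commutator_le.mpr ?_
  rintro _ ⟨g, -, rfl⟩ _ ⟨h, -, rfl⟩
  change MulAut.conj _ _ = MulAut.conj _ _
  simp only [MulAut.conj_apply, nuL_conj_commutator, nuR_conj_commutator]

lemma conj_eq_conj_nuL_retract {t : Nu G} (ht : t ∈ mixedCommutator ⊤ ⊤) (w : Nu G) :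
    w * t * w⁻¹ = nuL G (retract w) * t * (nuL G (retract w))⁻¹ := by
  induction w using induction_on generalizing t with
  | nuL k => rfl
  | nuR k => exact (conj_nuL_eq_conj_nuR ht k).symm
  | mul w w' hw hw' =>
    have hconj := (mixedCommutator_normal ⊤ ⊤).conj_mem t ht (nuL G (retract w'))
    calc w * w' * t * (w * w')⁻¹ = w * (w' * t * w'⁻¹) * w⁻¹ := by group
      _ = nuL G (retract w) * (nuL G (retract w') * t * (nuL G (retract w'))⁻¹) *
          (nuL G (retract w))⁻¹ := by rw [hw' ht, hw hconj]
      _ = _ := by simp only [map_mul]; group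

lemma commutator_mem_mixedCommutator_top (g h : G) :
    ⁅nuL G g, nuR G h⁆ ∈ mixedCommutator ⊤ ⊤ :=
  commutator_mem_commutator (mem_map_of_mem _ (mem_top g)) (mem_map_of_mem _ (mem_top h))

lemma conj_eq_conj_of_retract_eq {t : Nu G} (ht : t ∈ mixedCommutator ⊤ ⊤) {w w' : Nu G}
    (hw : retract w = retract w') : w * t * w⁻¹ = w' * t * w'⁻¹ := by
  rw [conj_eq_conj_nuL_retract ht, conj_eq_conj_nuL_retract ht w', hw]

/- Expand `⁅g, h⁆ = (g h g⁻¹) h⁻¹` in the first slot of `⁅l ⁅g, h⁆, r k⁆`, use the relation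
for `l g` to turn `g h g⁻¹` into `h`, and expand `g⁻¹ k g` in the second slot. Every
conjugation that appears acts on `T` through `ρ`, and the pieces recombine to `⁅t, l k⁆`. -/
lemma commutator_commutator_nuR_nuL_nuL (g h k : G) :
    ⁅⁅nuR G g, nuL G h⁆, nuL G k⁆ = ⁅nuL G ⁅g, h⁆, nuR G k⁆ := by
  set l := nuL G
  set r := nuR G
  set t := ⁅r g, l h⁆
  have hT := commutator_mem_mixedCommutator_top (G := G)
  have ht : t = ⁅l h, r g⁆⁻¹ := (commutatorElement_inv _ _).symm
  have hconj : l ⁅g, h⁆ * ⁅l h, r k⁆⁻¹ * (l ⁅g, h⁆)⁻¹ = t * ⁅l h, r k⁆⁻¹ * t⁻¹ :=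
    conj_eq_conj_of_retract_eq (inv_mem (hT h k))
      (by simp [t, l, r, map_commutatorElement])
  have hrel : ⁅l (g * h * g⁻¹), r k⁆ = l g * ⁅l h, r (g⁻¹ * k * g)⁆ * (l g)⁻¹ := by
    rw [nuL_conj_commutator, show g * (g⁻¹ * k * g) * g⁻¹ = k by group]
  have hexp : l g * ⁅l h, r (g⁻¹ * k * g)⁆ * (l g)⁻¹ =
      ⁅l h, r g⁆⁻¹ * ⁅l h, r k⁆ * (l k * ⁅l h, r g⁆ * (l k)⁻¹) :=
    calc _ = (l g * ⁅l h, r g⁻¹⁆ * (l g)⁻¹) *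
          (l g * (r g)⁻¹ * ⁅l h, r k⁆ * (l g * (r g)⁻¹)⁻¹) *
          (l g * (r g)⁻¹ * r k * ⁅l h, r g⁆ * (l g * (r g)⁻¹ * r k)⁻¹) := by
          simp only [commutatorElement_def, map_mul, map_inv]; group
      _ = (r g * ⁅l h, r g⁻¹⁆ * (r g)⁻¹) * (1 * ⁅l h, r k⁆ * 1⁻¹) *
          (l k * ⁅l h, r g⁆ * (l k)⁻¹) := by
          rw [conj_eq_conj_of_retract_eq (hT h (g⁻¹)) (w' := r g) (by simp [l, r]),
            conj_eq_conj_of_retract_eq (hT h k) (w' := 1) (by simp [l, r]),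
            conj_eq_conj_of_retract_eq (hT h g) (w' := l k) (by simp [l, r])]
      _ = _ := by simp only [commutatorElement_def, map_inv]; group
  symm
  calc ⁅l ⁅g, h⁆, r k⁆
        = l ⁅g, h⁆ * ⁅l h, r k⁆⁻¹ * (l ⁅g, h⁆)⁻¹ * ⁅l (g * h * g⁻¹), r k⁆ := by
        simp only [commutatorElement_def, map_mul, map_inv]; group
    _ = t * ⁅l h, r k⁆⁻¹ * t⁻¹ *
          (⁅l h, r g⁆⁻¹ * ⁅l h, r k⁆ * (l k * ⁅l h, r g⁆ * (l k)⁻¹)) := by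
        rw [hconj, hrel, hexp]
    _ = ⁅t, l k⁆ := by rw [ht, commutatorElement_def]; group

lemma commutator_nuL_of_mem {t : Nu G} (ht : t ∈ mixedCommutator ⊤ ⊤) (k : G) :
    ⁅t, nuL G k⁆ = ⁅nuL G (retract t), nuR G k⁆ := by
  have hT := commutator_mem_mixedCommutator_top (G := G)
  rw [mixedCommutator, commutator_comm, Subgroup.commutator_def] at ht
  induction ht using closure_induction with
  | mem x hx =>
    obtain ⟨_, ⟨g, -, rfl⟩, _, ⟨h, -, rfl⟩, rfl⟩ := hx
    simpa [map_commutatorElement] using commutator_commutator_nuR_nuL_nuL g h k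
  | one => simp
  | mul s t _ _ hs ht =>
    rw [commutatorElement_mul_left_eq_conj_mul, hs, ht, conj_eq_conj_nuL_retract (hT _ _) s,
      map_mul, map_mul, commutatorElement_mul_left_eq_conj_mul]
  | inv t _ ht =>
    rw [commutatorElement_inv_left, ← commutatorElement_inv, ht, map_inv, map_inv,
      commutatorElement_inv_left, ← commutatorElement_inv]
    simpa using conj_eq_conj_of_retract_eq (inv_mem (hT _ k)) (w := t⁻¹)
      (w' := (nuL G (retract t))⁻¹) (by simp)

lemma commutator_eq_of_mem {t : Nu G} (ht : t ∈ mixedCommutator ⊤ ⊤) (w : Nu G) :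
    ⁅t, w⁆ = ⁅nuL G (retract t), nuR G (retract w)⁆ :=
  calc ⁅t, w⁆ = t * (w * t⁻¹ * w⁻¹) := by rw [commutatorElement_def]; group
    _ = t * (nuL G (retract w) * t⁻¹ * (nuL G (retract w))⁻¹) := by
      rw [conj_eq_conj_nuL_retract (inv_mem ht)]
    _ = ⁅t, nuL G (retract w)⁆ := by rw [commutatorElement_def]; group
    _ = _ := commutator_nuL_of_mem ht _

lemma map_retract_mixedCommutator (M N : Subgroup G) :
    (mixedCommutator M N).map retract = ⁅M, N⁆ := by
  rw [mixedCommutator, map_commutator, map_map, map_map]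
  exact congrArg₂ _ (map_id M) (map_id N)

lemma map_swap_mixedCommutator (M N : Subgroup G) :
    (mixedCommutator M N).map swap = mixedCommutator N M := by
  rw [mixedCommutator, map_commutator, map_map, map_map, commutator_comm]
  rfl

lemma commutator_eq_mixedCommutator {S : Subgroup (Nu G)} (hS : S ≤ mixedCommutator ⊤ ⊤)
    (X : Subgroup (Nu G)) : ⁅S, X⁆ = mixedCommutator (S.map retract) (X.map retract) := by
  refine le_antisymm (commutator_le.mpr fun s hs x hx ↦ ?_) (commutator_le.mpr ?_)
  · rw [commutator_eq_of_mem (hS hs)]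
    exact commutator_mem_commutator (mem_map_of_mem _ (mem_map_of_mem _ hs))
      (mem_map_of_mem _ (mem_map_of_mem _ hx))
  · rintro _ ⟨_, ⟨s, hs, rfl⟩, rfl⟩ _ ⟨_, ⟨x, hx, rfl⟩, rfl⟩
    rw [← commutator_eq_of_mem (hS hs)]
    exact commutator_mem_commutator hs hx

lemma retract_surjective : Function.Surjective (retract (G := G)) :=
  fun g ↦ ⟨nuL G g, rfl⟩

lemma mixedCommutator_commutator_top_le (P : Subgroup G) [P.Normal] :
    mixedCommutator ⁅P, P⁆ ⊤ ≤ mixedCommutator P P := by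
  rw [← map_retract_mixedCommutator, ← map_top_of_surjective _ retract_surjective,
    ← commutator_eq_mixedCommutator (mixedCommutator_mono le_top le_top)]
  exact commutator_le_left _ _

lemma mixedCommutator_top_commutator_le (P : Subgroup G) [P.Normal] :
    mixedCommutator ⊤ ⁅P, P⁆ ≤ mixedCommutator P P := by
  rw [← map_swap_mixedCommutator, ← map_swap_mixedCommutator P]
  exact map_mono (mixedCommutator_commutator_top_le P)

lemma nuL_range_sup_nuR_range : (nuL G).range ⊔ (nuR G).range = ⊤ :=
  eq_top_iff.mpr fun x _ ↦ induction_on x (fun g ↦ mem_sup_left ⟨g, rfl⟩)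
    (fun g ↦ mem_sup_right ⟨g, rfl⟩) (fun _ _ ↦ mul_mem)

/-- The subgroup `P · Pφ · [Q, Qφ]` of `ν(G)`. -/
def seriesTerm (P Q : Subgroup G) : Subgroup (Nu G) :=
  P.map (nuL G) ⊔ P.map (nuR G) ⊔ mixedCommutator Q Q

instance seriesTerm_commutator_normal (P : Subgroup G) [P.Normal] :
    (seriesTerm ⁅P, P⁆ P).Normal := by
  have hl : ⁅P, P⁆.map (nuL G) ≤ seriesTerm ⁅P, P⁆ P := le_sup_left.trans le_sup_left
  have hr : ⁅P, P⁆.map (nuR G) ≤ seriesTerm ⁅P, P⁆ P := le_sup_right.trans le_sup_left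
  have hm : mixedCommutator P P ≤ seriesTerm ⁅P, P⁆ P := le_sup_right
  have hmixed (w : Nu G) :
      mixedCommutator P P ≤ (seriesTerm ⁅P, P⁆ P).comap (MulAut.conj w).toMonoidHom :=
    fun x hx ↦ hm ((mixedCommutator_normal P P).conj_mem x hx w)
  refine normal_of_le_comap_conj _ (fun k ↦ sup_le (sup_le ?_ ?_) (hmixed _))
    (fun k ↦ sup_le (sup_le ?_ ?_) (hmixed _)) <;>
  rintro _ ⟨a, ha, rfl⟩ <;>
  simp only [mem_comap, MulEquiv.coe_toMonoidHom]
  · rw [MulAut.conj_apply, ← map_inv, ← map_mul, ← map_mul]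
    exact hl (mem_map_of_mem _ ((commutator_normal P P).conj_mem a ha k))
  · rw [conj_eq_commutatorElement_mul]
    refine mul_mem (hm (mixedCommutator_top_commutator_le P ?_)) (hr (mem_map_of_mem _ ha))
    exact commutator_mem_commutator (mem_map_of_mem _ (mem_top k)) (mem_map_of_mem _ ha)
  · rw [conj_eq_commutatorElement_mul, ← commutatorElement_inv]
    refine mul_mem (inv_mem (hm (mixedCommutator_commutator_top_le P ?_)))
      (hl (mem_map_of_mem _ ha))
    exact commutator_mem_commutator (mem_map_of_mem _ ha) (mem_map_of_mem _ (mem_top k))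
  · rw [MulAut.conj_apply, ← map_inv, ← map_mul, ← map_mul]
    exact hr (mem_map_of_mem _ ((commutator_normal P P).conj_mem a ha k))

lemma commutator_seriesTerm {P Q : Subgroup G} [P.Normal] (hQP : ⁅Q, Q⁆ ≤ P) :
    ⁅seriesTerm P Q, seriesTerm P Q⁆ = seriesTerm ⁅P, P⁆ P := by
  set Y := P.map (nuL G) ⊔ P.map (nuR G)
  have hYl : P.map (nuL G) ≤ seriesTerm P Q := le_sup_left.trans le_sup_left
  have hYr : P.map (nuR G) ≤ seriesTerm P Q := le_sup_right.trans le_sup_left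
  have hY : Y.map retract ≤ P := by
    simp only [Y, Subgroup.map_sup, map_map]
    exact sup_le (map_id P).le (map_id P).le
  have hmixed : ∀ X : Subgroup (Nu G), X.map retract ≤ P →
      ⁅mixedCommutator Q Q, X⁆ ≤ seriesTerm ⁅P, P⁆ P := fun X hX ↦ by
    rw [commutator_eq_mixedCommutator (mixedCommutator_mono le_top le_top),
      map_retract_mixedCommutator]
    exact (mixedCommutator_mono hQP hX).trans le_sup_right
  have hYY : ⁅Y, Y⁆ ≤ seriesTerm ⁅P, P⁆ P := by
    simp only [Y, commutator_sup_left_le_iff, commutator_comm _ (_ ⊔ _)]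
    refine ⟨⟨?_, ?_⟩, le_sup_right, ?_⟩
    · rw [← map_commutator]; exact le_sup_left.trans le_sup_left
    · rw [commutator_comm]; exact le_sup_right
    · rw [← map_commutator]; exact le_sup_right.trans le_sup_left
  refine le_antisymm ?_ (sup_le (sup_le ?_ ?_) ?_)
  · change ⁅Y ⊔ mixedCommutator Q Q, Y ⊔ mixedCommutator Q Q⁆ ≤ _
    rw [commutator_sup_left_le_iff, commutator_comm, commutator_sup_left_le_iff]
    refine ⟨⟨hYY, hmixed Y hY⟩, hmixed _ ?_⟩
    simp only [Subgroup.map_sup, sup_le_iff]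
    exact ⟨hY, by rw [map_retract_mixedCommutator]; exact hQP⟩
  · rw [map_commutator]; exact commutator_mono hYl hYl
  · rw [map_commutator]; exact commutator_mono hYr hYr
  · exact commutator_mono hYl hYr

lemma derivedSeries_succ_eq (n : ℕ) :
    derivedSeries (Nu G) (n + 1) = seriesTerm (derivedSeries G (n + 1)) (derivedSeries G n) := by
  induction n with
  | zero =>
    have htop : seriesTerm (⊤ : Subgroup G) ⊤ = ⊤ := by
      rw [seriesTerm, ← MonoidHom.range_eq_map, ← MonoidHom.range_eq_map,
        nuL_range_sup_nuR_range, top_sup_eq]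
    rw [derivedSeries_succ, derivedSeries_zero, ← htop, commutator_seriesTerm le_top]
    rfl
  | succ n ih =>
    rw [derivedSeries_succ, ih, commutator_seriesTerm (P := derivedSeries G (n + 1)) le_rfl]
    rfl

end Nu

open Nu in
/-- For i ≥ 2 (here i = j + 2): ν(G)^(i) = G^(i)·(Gφ)^(i)·[G^(i-1),(Gφ)^(i-1)];
in particular ν(G)' = [G,Gφ]·G'·(G')φ. -/
theorem nu_derived_series (G : Type*) [Group G] :
    (∀ j : ℕ,
      derivedSeries (Nu G) (j + 2) =
        (derivedSeries G (j + 2)).map (nuL G) ⊔ (derivedSeries G (j + 2)).map (nuR G) ⊔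
          ⁅(derivedSeries G (j + 1)).map (nuL G), (derivedSeries G (j + 1)).map (nuR G)⁆) ∧
    derivedSeries (Nu G) 1 =
      ⁅(nuL G).range, (nuR G).range⁆ ⊔ (commutator G).map (nuL G) ⊔
        (commutator G).map (nuR G) := by
  refine ⟨fun j ↦ derivedSeries_succ_eq (j + 1), ?_⟩
  rw [derivedSeries_succ_eq, seriesTerm, mixedCommutator, derivedSeries_one, derivedSeries_zero,
    MonoidHom.range_eq_map, MonoidHom.range_eq_map, sup_comm, sup_assoc]
end

section
/- If G is a finite-by-nilpotent group, then ν(G) is nilpotent-by-finite. -/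
/-!
Let `H` be a nilpotent normal subgroup of `G` of class `c`; for finite-by-nilpotent `G`, the
centralizer of the finite term `γ_{k+1}(G)` is one, of finite index. Let `ρ : ν(G) → G` and
`π : ν(G) → G × G` send `g` and `hφ` to `g`, `h` and to `(g, 1)`, `(1, h)`. Then
`N = ρ⁻¹(H) ∩ π⁻¹(H × H)` has finite index, and `π` maps `γ_{c+1}(N)` into
`γ_{c+1}(H) × γ_{c+1}(H) = 1`, so `γ_{c+1}(N) ≤ ker π = [G, Gφ]`.

Conjugation by `w ∈ ν(G)` acts on `[G, Gφ]` as conjugation by the copy of `ρ(w)` in `G` does,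
so `N` acts there through `H`. Give `G` weight `0` and `γ_{i+1}(H)` weight `i + 1`. Commutation
with `z ∈ H` raises the total weight of a generator `[u, vφ]`: by the Hall–Witt identity when
`u` or `v` has weight `0`, and otherwise because conjugation by `z` turns `[u, vφ]` into
`[[z,u] u, ([z,v] v)φ]`, which is, modulo higher weight, the conjugate of `[u, vφ]` by
`[z,u][z,v]`, whose weight exceeds that of `z`, so a descending induction on that weight
applies. Weights beyond `c` carry only the identity, so the series terminates.
-/

open Monoid Subgroup
open scoped commutatorElement

namespace Subgroup

variable {G : Type*} [Group G]

theorem lowerCentralSeries_add_le {S : Subgroup G} {C : ℕ → Subgroup G}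
    (hC : ∀ t, ⁅C t, S⁆ ≤ C (t + 1)) {a : ℕ} (ha : S.lowerCentralSeries a ≤ C 0) :
    ∀ t, S.lowerCentralSeries (a + t) ≤ C t
  | 0 => ha
  | t + 1 => (commutator_mono (lowerCentralSeries_add_le hC ha t) le_rfl).trans (hC t)

theorem lowerCentralSeries_le_ker {K : Type*} [Group K] {f : G →* K} {S : Subgroup G}
    {T : Subgroup K} {n : ℕ} (hST : S.map f ≤ T) (hT : T.lowerCentralSeries n = ⊥) :
    S.lowerCentralSeries n ≤ f.ker := by
  rw [← map_eq_bot_iff, map_lowerCentralSeries, eq_bot_iff, ← hT]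
  exact lowerCentralSeries_mono n hST

theorem commutator_closure_le {S : Set G} {K M : Subgroup G} [M.Normal]
    (h : ∀ s ∈ S, ∀ g ∈ K, ⁅s, g⁆ ∈ M) : ⁅closure S, K⁆ ≤ M := by
  set q := QuotientGroup.mk' M
  have key : ∀ x g, ⁅x, g⁆ ∈ M ↔ x ∈ (centralizer {q g}).comap q := fun x g => by
    rw [mem_comap, mem_centralizer_singleton_iff, ← QuotientGroup.eq_one_iff,
      ← QuotientGroup.mk'_apply, map_commutatorElement, commutatorElement_eq_one_iff_mul_comm,
      eq_comm]
  refine commutator_le.mpr fun x hx g hg => (key x g).mpr ?_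
  exact (closure_le _).mpr (fun s hs => (key s g).mp (h s hs g hg)) hx

theorem Normal.commutatorElement_mem_left {M : Subgroup G} (hM : M.Normal) {x : G} (hx : x ∈ M)
    (g : G) : ⁅x, g⁆ ∈ M :=
  commutator_le_left M ⊤ (commutator_mem_commutator hx (mem_top g))

theorem Normal.commutatorElement_mem_right {M : Subgroup G} (hM : M.Normal) {x : G} (hx : x ∈ M)
    (g : G) : ⁅g, x⁆ ∈ M :=
  commutator_le_right ⊤ M (commutator_mem_commutator (mem_top g) hx)

theorem Normal.commutatorElement_commutatorElement_mem_of_rotate {M : Subgroup G} (hM : M.Normal)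
    {a b c : G} (h₁ : ⁅⁅c⁻¹, a⁻¹⁆, b⁆ ∈ M) (h₂ : ⁅⁅b⁻¹, c⁆, a⁻¹⁆ ∈ M) : ⁅⁅a, b⁆, c⁆ ∈ M := by
  have hallWitt : ⁅⁅a, b⁆, c⁆ =
      a * (c * ⁅⁅c⁻¹, a⁻¹⁆, b⁆ * c⁻¹ * (b * ⁅⁅b⁻¹, c⁆, a⁻¹⁆ * b⁻¹))⁻¹ * a⁻¹ := by
    simp only [commutatorElement_def]; group
  rw [hallWitt]
  exact hM.conj_mem _ (M.inv_mem (M.mul_mem (hM.conj_mem _ h₁ c) (hM.conj_mem _ h₂ b))) a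

theorem Normal.commutatorElement_mem_of_conj_eq {M : Subgroup G} (hM : M.Normal) {d w g p q : G}
    (hconj : w * d * w⁻¹ = p * (g * d * g⁻¹) * q) (hp : p ∈ M) (hq : q ∈ M)
    (hg : ⁅d, g⁆ ∈ M) : ⁅d, w⁆ ∈ M := by
  have : ⁅d, w⁆ = d * q⁻¹ * d⁻¹ * ⁅d, g⁆ * p⁻¹ := by
    calc ⁅d, w⁆ = d * (w * d * w⁻¹)⁻¹ := by simp only [commutatorElement_def]; group
      _ = _ := by rw [hconj]; simp only [commutatorElement_def]; group
  rw [this]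
  exact M.mul_mem (M.mul_mem (hM.conj_mem _ (M.inv_mem hq) d) hg) (M.inv_mem hp)

theorem finiteIndex_comap {K : Type*} [Group K] (f : G →* K) (T : Subgroup K) [T.FiniteIndex] :
    (T.comap f).FiniteIndex :=
  ⟨by rw [index_comap]; exact (isFiniteRelIndex_of_finiteIndex (K := f.range)).relIndex_ne_zero⟩

theorem finiteIndex_centralizer {L : Subgroup G} [L.Normal] [Finite L] :
    (centralizer (L : Set G)).FiniteIndex := by
  refine finiteIndex_of_le (H := (MulAut.conjNormal : G →* MulAut L).ker) fun g hg x hx => ?_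
  have := congrArg Subtype.val (DFunLike.congr_fun hg ⟨x, hx⟩)
  simp only [MulAut.conjNormal_apply, MulAut.one_apply] at this
  calc x * g = g * x * g⁻¹ * g := by rw [this]
    _ = g * x := by group

theorem isNilpotent_centralizer_lowerCentralSeries (k : ℕ) :
    Group.IsNilpotent (centralizer ((⊤ : Subgroup G).lowerCentralSeries k : Set G)) := by
  refine isNilpotent_of_lowerCentralSeries_eq_bot (n := k + 1) ?_
  rw [lowerCentralSeries_succ, commutator_eq_bot_iff_le_centralizer]
  exact (lowerCentralSeries_mono k le_top).trans (le_centralizer_iff.mp le_rfl)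

end Subgroup

namespace Nu

variable {G : Type*} [Group G]

local notation "ι" => nuL G
local notation "ιφ" => nuR G

theorem hom_ext {M : Type*} [Group M] {f g : Nu G →* M}
    (hL : f.comp (nuL G) = g.comp (nuL G)) (hR : f.comp (nuR G) = g.comp (nuR G)) : f = g :=
  QuotientGroup.monoidHom_ext _ (Coprod.hom_ext hL hR)

theorem mk_eq_one_of_mem_nuRels {r : Coprod G G} (hr : r ∈ nuRels G) :
    (QuotientGroup.mk' (normalClosure (nuRels G)) r : Nu G) = 1 :=
  (QuotientGroup.eq_one_iff r).mpr (subset_normalClosure hr)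

theorem nuL_conj_commutator_s17 (x g h : G) :
    ι x * ⁅ι g, ιφ h⁆ * (ι x)⁻¹ = ⁅ι (x * g * x⁻¹), ιφ (x * h * x⁻¹)⁆ := by
  have hr : (ι x⁻¹)⁻¹ * ⁅ι g, ιφ h⁆ * ι x⁻¹ *
      ⁅ι (x⁻¹⁻¹ * g * x⁻¹), ιφ (x⁻¹⁻¹ * h * x⁻¹)⁆⁻¹ = 1 :=
    mk_eq_one_of_mem_nuRels ⟨g, h, x⁻¹, Or.inl rfl⟩
  rwa [mul_inv_eq_one, map_inv, inv_inv, inv_inv] at hr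

theorem nuR_conj_commutator_s17 (x g h : G) :
    ιφ x * ⁅ι g, ιφ h⁆ * (ιφ x)⁻¹ = ⁅ι (x * g * x⁻¹), ιφ (x * h * x⁻¹)⁆ := by
  have hr : (ιφ x⁻¹)⁻¹ * ⁅ι g, ιφ h⁆ * ιφ x⁻¹ *
      ⁅ι (x⁻¹⁻¹ * g * x⁻¹), ιφ (x⁻¹⁻¹ * h * x⁻¹)⁆⁻¹ = 1 :=
    mk_eq_one_of_mem_nuRels ⟨g, h, x⁻¹, Or.inr rfl⟩
  rwa [mul_inv_eq_one, map_inv, inv_inv, inv_inv] at hr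

def rho : Nu G →* G :=
  QuotientGroup.lift _ (Coprod.lift (.id G) (.id G)) <| normalClosure_le_normal <| by
    rintro r ⟨g, h, k, rfl | rfl⟩ <;>
      simp only [SetLike.mem_coe, MonoidHom.mem_ker, map_mul, map_inv, Coprod.lift_apply_inl,
        Coprod.lift_apply_inr, MonoidHom.id_apply, commutatorElement_def] <;>
      group

def pi : Nu G →* G × G :=
  QuotientGroup.lift _ (Coprod.lift (.inl G G) (.inr G G)) <| normalClosure_le_normal <| by
    rintro r ⟨g, h, k, rfl | rfl⟩ <;> ext <;> simp [commutatorElement_def]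

@[simp] theorem rho_nuL (g : G) : rho (ι g) = g := rfl
@[simp] theorem rho_nuR (g : G) : rho (ιφ g) = g := rfl
@[simp] theorem pi_nuL (g : G) : pi (ι g) = (g, 1) := rfl
@[simp] theorem pi_nuR (g : G) : pi (ιφ g) = (1, g) := rfl

variable (G) in
/-- `[G, Gφ]`, isomorphic to the non-abelian tensor square `G ⊗ G`. -/
def tensorSquare : Subgroup (Nu G) := ⁅(nuL G).range, (nuR G).range⁆

theorem tensorSquare_le_iff {K : Subgroup (Nu G)} :
    tensorSquare G ≤ K ↔ ∀ g h : G, ⁅ι g, ιφ h⁆ ∈ K := by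
  simp [tensorSquare, commutator_le]

theorem commutator_mem_tensorSquare (g h : G) : ⁅ι g, ιφ h⁆ ∈ tensorSquare G :=
  tensorSquare_le_iff.mp le_rfl g h

theorem nuL_conj_mem_tensorSquare (x : G) {d : Nu G} (hd : d ∈ tensorSquare G) :
    ι x * d * (ι x)⁻¹ ∈ tensorSquare G := by
  have : tensorSquare G ≤ (tensorSquare G).comap (MulAut.conj (ι x)).toMonoidHom :=
    tensorSquare_le_iff.mpr fun g h => by
      rw [mem_comap, MulEquiv.coe_toMonoidHom, MulAut.conj_apply, nuL_conj_commutator_s17]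
      exact commutator_mem_tensorSquare _ _
  exact this hd

theorem nuR_conj_eq_nuL_conj (x : G) {d : Nu G} (hd : d ∈ tensorSquare G) :
    ιφ x * d * (ιφ x)⁻¹ = ι x * d * (ι x)⁻¹ := by
  have : tensorSquare G ≤
      (MulAut.conj (ιφ x)).toMonoidHom.eqLocus (MulAut.conj (ι x)).toMonoidHom :=
    tensorSquare_le_iff.mpr fun g h => by
      change MulAut.conj (ιφ x) ⁅ι g, ιφ h⁆ = MulAut.conj (ι x) ⁅ι g, ιφ h⁆
      rw [MulAut.conj_apply, MulAut.conj_apply, nuL_conj_commutator_s17, nuR_conj_commutator_s17]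
  exact this hd

@[elab_as_elim]
theorem induction_on_s17 {motive : Nu G → Prop} (w : Nu G) (one : motive 1)
    (nuL_mul : ∀ g w, motive w → motive (ι g * w))
    (nuR_mul : ∀ g w, motive w → motive (ιφ g * w)) : motive w := by
  obtain ⟨q, rfl⟩ := QuotientGroup.mk'_surjective _ w
  induction q using Coprod.induction_on' with
  | one => exact one
  | inl_mul g q ih => exact nuL_mul g _ ih
  | inr_mul g q ih => exact nuR_mul g _ ih

theorem conj_eq_nuL_rho_conj (w : Nu G) {d : Nu G} (hd : d ∈ tensorSquare G) :
    w * d * w⁻¹ = ι (rho w) * d * (ι (rho w))⁻¹ := by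
  induction w using induction_on_s17 generalizing d with
  | one => simp
  | nuL_mul g w ih =>
    calc ι g * w * d * (ι g * w)⁻¹ = ι g * (w * d * w⁻¹) * (ι g)⁻¹ := by group
      _ = ι (rho (ι g * w)) * d * (ι (rho (ι g * w)))⁻¹ := by
        rw [ih hd, map_mul, rho_nuL, map_mul]; group
  | nuR_mul g w ih =>
    calc ιφ g * w * d * (ιφ g * w)⁻¹ = ιφ g * (w * d * w⁻¹) * (ιφ g)⁻¹ := by group
      _ = ι g * (ι (rho w) * d * (ι (rho w))⁻¹) * (ι g)⁻¹ := by
        rw [ih hd, nuR_conj_eq_nuL_conj g (nuL_conj_mem_tensorSquare _ hd)]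
      _ = ι (rho (ιφ g * w)) * d * (ι (rho (ιφ g * w)))⁻¹ := by
        rw [map_mul, rho_nuR, map_mul]; group

theorem nuL_conj_commutator_eq_mul (z u v : G) :
    ι z * ⁅ι u, ιφ v⁆ * (ι z)⁻¹ = (ι ⁅z, u⁆ * ⁅ι u, ιφ ⁅z, v⁆⁆ * (ι ⁅z, u⁆)⁻¹) *
      (ι (⁅z, u⁆ * ⁅z, v⁆) * ⁅ι u, ιφ v⁆ * (ι (⁅z, u⁆ * ⁅z, v⁆))⁻¹) *
      ⁅ι ⁅z, u⁆, ιφ (⁅z, v⁆ * v)⁆ := by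
  have hρ : rho (ι ⁅z, u⁆ * ιφ ⁅z, v⁆) = ⁅z, u⁆ * ⁅z, v⁆ := by simp
  rw [← hρ, ← conj_eq_nuL_rho_conj _ (commutator_mem_tensorSquare u v), nuL_conj_commutator_s17,
    show z * u * z⁻¹ = ⁅z, u⁆ * u by group, show z * v * z⁻¹ = ⁅z, v⁆ * v by group]
  simp only [map_mul, commutatorElement_def]
  group

instance : (tensorSquare G).Normal :=
  ⟨fun d hd w => by rw [conj_eq_nuL_rho_conj w hd]; exact nuL_conj_mem_tensorSquare _ hd⟩

theorem ker_pi_le_tensorSquare : (pi (G := G)).ker ≤ tensorSquare G := by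
  set q := QuotientGroup.mk' (tensorSquare G)
  have hcomm : ∀ g h : G, Commute (q (ι g)) (q (ιφ h)) := fun g h => by
    rw [← commutatorElement_eq_one_iff_commute, ← map_commutatorElement]
    exact (QuotientGroup.eq_one_iff _).mpr (commutator_mem_tensorSquare g h)
  have hq : (MonoidHom.noncommCoprod (q.comp (nuL G)) (q.comp (nuR G)) hcomm).comp pi = q :=
    hom_ext (by ext g; simp) (by ext g; simp)
  intro x hx
  have : q x = 1 := by rw [← hq, MonoidHom.comp_apply, MonoidHom.mem_ker.mp hx, map_one]
  exact (QuotientGroup.eq_one_iff x).mp this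

theorem commutator_eq_commutator_nuL_rho {d : Nu G} (hd : d ∈ tensorSquare G) (w : Nu G) :
    ⁅d, w⁆ = ⁅d, ι (rho w)⁆ := by
  have hconj : ∀ w' : Nu G, ⁅d, w'⁆ = d * (w' * d * w'⁻¹)⁻¹ := fun w' => by
    simp only [commutatorElement_def]; group
  rw [hconj, hconj, conj_eq_nuL_rho_conj w hd]

section Filtration

variable (H : Subgroup G)

def weightSeries : ℕ → Subgroup G
  | 0 => ⊤
  | i + 1 => H.lowerCentralSeries i

instance [H.Normal] (i : ℕ) : (weightSeries H i).Normal := by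
  cases i <;> dsimp only [weightSeries] <;> infer_instance

theorem weightSeries_antitone : Antitone (weightSeries H) := by
  refine antitone_nat_of_succ_le fun i => ?_
  cases i with
  | zero => exact le_top
  | succ i => exact H.lowerCentralSeries_antitone i.le_succ

theorem weightSeries_le {i : ℕ} (hi : i ≠ 0) : weightSeries H i ≤ H :=
  weightSeries_antitone H (Nat.one_le_iff_ne_zero.mpr hi)

theorem commutator_mem_weightSeries_succ {i : ℕ} {z h : G} (hz : z ∈ weightSeries H (i + 1))
    (hh : h ∈ H) : ⁅z, h⁆ ∈ weightSeries H (i + 2) :=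
  commutator_mem_commutator hz hh

theorem commutator_mem_weightSeries_succ' {i : ℕ} {z h : G} (hh : h ∈ H)
    (hz : z ∈ weightSeries H (i + 1)) : ⁅h, z⁆ ∈ weightSeries H (i + 2) := by
  rw [← commutatorElement_inv]
  exact inv_mem (commutator_mem_weightSeries_succ H hz hh)

theorem weightSeries_eq_bot {c : ℕ} (hc : H.lowerCentralSeries c = ⊥) {i : ℕ} (hi : c < i) :
    weightSeries H i = ⊥ :=
  le_bot_iff.mp (hc ▸ weightSeries_antitone H hi)

def filtration (s : ℕ) : Subgroup (Nu G) :=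
  closure {x | ∃ i j, s ≤ i + j ∧
    ∃ u ∈ weightSeries H i, ∃ v ∈ weightSeries H j, ⁅ι u, ιφ v⁆ = x}

variable {H}

theorem commutator_mem_filtration {s i j : ℕ} {u v : G} (hs : s ≤ i + j)
    (hu : u ∈ weightSeries H i) (hv : v ∈ weightSeries H j) : ⁅ι u, ιφ v⁆ ∈ filtration H s :=
  subset_closure ⟨i, j, hs, u, hu, v, hv, rfl⟩

variable (H)

theorem filtration_antitone : Antitone (filtration H) :=
  fun _ _ hst => closure_mono fun _ ⟨i, j, hs, rest⟩ => ⟨i, j, hst.trans hs, rest⟩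

theorem tensorSquare_le_filtration_zero : tensorSquare G ≤ filtration H 0 :=
  tensorSquare_le_iff.mpr fun g h =>
    commutator_mem_filtration (i := 0) (j := 0) le_rfl (mem_top g) (mem_top h)

theorem filtration_le_tensorSquare (s : ℕ) : filtration H s ≤ tensorSquare G :=
  (closure_le _).mpr fun _ ⟨_, _, _, u, _, v, _, hx⟩ => hx ▸ commutator_mem_tensorSquare u v

theorem filtration_eq_bot {c : ℕ} (hc : H.lowerCentralSeries c = ⊥) :
    filtration H (2 * c + 1) = ⊥ := by
  refine closure_eq_bot_iff.mpr ?_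
  rintro _ ⟨i, j, hs, u, hu, v, hv, rfl⟩
  rcases Nat.lt_or_ge c i with hi | hi
  · rw [weightSeries_eq_bot H hc hi, mem_bot] at hu
    simp [hu]
  · rw [weightSeries_eq_bot H hc (by omega : c < j), mem_bot] at hv
    simp [hv]

variable [H.Normal]

theorem nuL_conj_mem_filtration (x : G) {s : ℕ} {d : Nu G} (hd : d ∈ filtration H s) :
    ι x * d * (ι x)⁻¹ ∈ filtration H s := by
  have : filtration H s ≤ (filtration H s).comap (MulAut.conj (ι x)).toMonoidHom := by
    refine (closure_le _).mpr ?_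
    rintro _ ⟨i, j, hs, u, hu, v, hv, rfl⟩
    rw [SetLike.mem_coe, mem_comap, MulEquiv.coe_toMonoidHom, MulAut.conj_apply,
      nuL_conj_commutator_s17]
    exact commutator_mem_filtration hs (Normal.conj_mem inferInstance u hu x)
      (Normal.conj_mem inferInstance v hv x)
  exact this hd

instance (s : ℕ) : (filtration H s).Normal :=
  ⟨fun d hd w => by
    rw [conj_eq_nuL_rho_conj w (filtration_le_tensorSquare H s hd)]
    exact nuL_conj_mem_filtration H _ hd⟩

variable {H}

theorem commutator_commutator_nuL_mem_filtration_zero_left (u : G) {j : ℕ} {v z : G}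
    (hv : v ∈ weightSeries H j) (hz : z ∈ H) :
    ⁅⁅ι u, ιφ v⁆, ι z⁆ ∈ filtration H (j + 1) := by
  have hF : (filtration H (j + 1)).Normal := inferInstance
  refine hF.commutatorElement_commutatorElement_mem_of_rotate ?_ ?_
  · rw [← map_inv, ← map_inv, ← map_commutatorElement]
    exact commutator_mem_filtration (i := 1) (by omega)
      (Normal.commutatorElement_mem_left inferInstance (inv_mem hz) _) hv
  · refine hF.commutatorElement_mem_left ?_ _
    rw [← commutatorElement_inv, ← map_inv]
    exact inv_mem (commutator_mem_filtration (i := 1) (by omega) hz (inv_mem hv))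

theorem commutator_commutator_nuL_mem_filtration_zero_right {i : ℕ} {u : G} (v : G) {z : G}
    (hu : u ∈ weightSeries H i) (hz : z ∈ H) :
    ⁅⁅ι u, ιφ v⁆, ι z⁆ ∈ filtration H (i + 1) := by
  have hF : (filtration H (i + 1)).Normal := inferInstance
  -- `ιφ z` acts on `[G, Gφ]` as `ι z` does; Hall–Witt is applied with `ιφ z` instead.
  rw [← rho_nuR z, ← commutator_eq_commutator_nuL_rho (commutator_mem_tensorSquare u v)]
  refine hF.commutatorElement_commutatorElement_mem_of_rotate ?_ ?_
  · refine hF.commutatorElement_mem_left ?_ _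
    rw [← commutatorElement_inv, ← map_inv, ← map_inv]
    exact inv_mem (commutator_mem_filtration (j := 1) le_rfl (inv_mem hu) (inv_mem hz))
  · rw [← map_inv, ← map_commutatorElement, ← commutatorElement_inv, ← map_inv]
    exact inv_mem (commutator_mem_filtration (j := 1) le_rfl (inv_mem hu)
      (Normal.commutatorElement_mem_right inferInstance hz _))

theorem commutator_commutator_nuL_mem_filtration_succ [Group.IsNilpotent H] {i j : ℕ}
    {u v z : G} (hu : u ∈ weightSeries H (i + 1)) (hv : v ∈ weightSeries H (j + 1))
    (hz : z ∈ H) : ⁅⁅ι u, ιφ v⁆, ι z⁆ ∈ filtration H (i + j + 3) := by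
  obtain ⟨c, hc⟩ := (isNilpotent_iff_lowerCentralSeries H).mp ‹_›
  set F := filtration H (i + j + 3)
  set d := ⁅ι u, ιφ v⁆
  have huH := weightSeries_le H i.succ_ne_zero hu
  have hvH := weightSeries_le H j.succ_ne_zero hv
  let P (m : ℕ) : Prop := ∀ z ∈ weightSeries H (m + 1), ⁅d, ι z⁆ ∈ F
  have top (m : ℕ) (hm : c ≤ m) : P m := fun z hz => by
    rw [weightSeries_eq_bot H hc (by omega), mem_bot] at hz
    simp [hz]
  have step (m : ℕ) (ih : P (m + 1)) : P m := fun z hz => by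
    have hzH := weightSeries_le H m.succ_ne_zero hz
    have ha : ⁅z, u⁆ ∈ weightSeries H (i + 2) := commutator_mem_weightSeries_succ' H hzH hu
    have hb : ⁅z, v⁆ ∈ weightSeries H (j + 2) := commutator_mem_weightSeries_succ' H hzH hv
    have hab : ⁅z, u⁆ * ⁅z, v⁆ ∈ weightSeries H (m + 2) :=
      mul_mem (commutator_mem_weightSeries_succ H hz huH)
        (commutator_mem_weightSeries_succ H hz hvH)
    have hbv : ⁅z, v⁆ * v ∈ weightSeries H (j + 1) :=
      mul_mem (weightSeries_antitone H (j + 1).le_succ hb) hv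
    refine (inferInstance : F.Normal).commutatorElement_mem_of_conj_eq
      (nuL_conj_commutator_eq_mul z u v) ?_ ?_ (ih _ hab)
    · exact Normal.conj_mem inferInstance _ (commutator_mem_filtration (by omega) hu hb) _
    · exact commutator_mem_filtration (by omega) ha hbv
  have hP : ∀ n m, c ≤ m + n → P m := by
    intro n
    induction n with
    | zero => exact top
    | succ n ih => exact fun m hm => step m (ih (m + 1) (by omega))
  exact hP c 0 (by omega) z hz

theorem commutator_commutator_nuL_mem_filtration [Group.IsNilpotent H] {i j : ℕ} {u v z : G}
    (hu : u ∈ weightSeries H i) (hv : v ∈ weightSeries H j) (hz : z ∈ H) :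
    ⁅⁅ι u, ιφ v⁆, ι z⁆ ∈ filtration H (i + j + 1) := by
  rcases i with _ | i
  · rw [Nat.zero_add]
    exact commutator_commutator_nuL_mem_filtration_zero_left u hv hz
  rcases j with _ | j
  · exact commutator_commutator_nuL_mem_filtration_zero_right v hu hz
  · rw [show i + 1 + (j + 1) + 1 = i + j + 3 by omega]
    exact commutator_commutator_nuL_mem_filtration_succ hu hv hz

end Filtration

section Core

variable (H : Subgroup G)

def core : Subgroup (Nu G) := H.comap rho ⊓ (H.prod H).comap pi

instance [H.Normal] : (core H).Normal := by
  unfold core; infer_instance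

instance [H.FiniteIndex] : (core H).FiniteIndex := by
  have := finiteIndex_comap (rho (G := G)) H
  have := finiteIndex_comap (pi (G := G)) (H.prod H)
  unfold core; infer_instance

variable [H.Normal]

theorem commutator_filtration_core_le [Group.IsNilpotent H] (s : ℕ) :
    ⁅filtration H s, core H⁆ ≤ filtration H (s + 1) := by
  refine commutator_closure_le ?_
  rintro _ ⟨i, j, hs, u, hu, v, hv, rfl⟩ n hn
  rw [commutator_eq_commutator_nuL_rho (commutator_mem_tensorSquare u v)]
  exact filtration_antitone H (by omega)
    (commutator_commutator_nuL_mem_filtration hu hv (mem_inf.mp hn).1)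

theorem isNilpotent_core [Group.IsNilpotent H] : Group.IsNilpotent (core H) := by
  obtain ⟨c, hc⟩ := (isNilpotent_iff_lowerCentralSeries H).mp ‹_›
  have hker : (core H).lowerCentralSeries c ≤ filtration H 0 :=
    calc (core H).lowerCentralSeries c ≤ (pi (G := G)).ker :=
          lowerCentralSeries_le_ker (map_le_iff_le_comap.mpr inf_le_right)
            (by rw [Subgroup.lowerCentralSeries_prod, hc, bot_prod_bot])
      _ ≤ tensorSquare G := ker_pi_le_tensorSquare
      _ ≤ filtration H 0 := tensorSquare_le_filtration_zero H
  refine isNilpotent_of_lowerCentralSeries_eq_bot (n := c + (2 * c + 1)) (le_bot_iff.mp ?_)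
  exact (lowerCentralSeries_add_le (commutator_filtration_core_le H) hker _).trans
    (filtration_eq_bot H hc).le

end Core

end Nu

/-- Theorem A(b): if G is finite-by-nilpotent, then ν(G) is nilpotent-by-finite. -/
theorem nu_nilpotent_by_finite (G : Type*) [Group G]
    (h : ∃ k : ℕ, Finite ((⊤ : Subgroup G).lowerCentralSeries k)) :
    ∃ N : Subgroup (Nu G), N.Normal ∧ Group.IsNilpotent N ∧ N.FiniteIndex := by
  obtain ⟨k, hk⟩ := h
  set H := centralizer ((⊤ : Subgroup G).lowerCentralSeries k : Set G)
  have : Group.IsNilpotent H := isNilpotent_centralizer_lowerCentralSeries k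
  have : H.FiniteIndex := finiteIndex_centralizer
  exact ⟨Nu.core H, inferInstance, Nu.isNilpotent_core H, inferInstance⟩
end
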